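/- Let μ(A) = γ(m(A)) with γ(x) = 1 − e^{−x} and m Lebesgue measure, and V the corresponding Volterra–Choquet operator on C[0,1]. Then V is cyclic: the linear span of Orb(V, f₀) = {f₀, V(f₀), V²(f₀), ...} with f₀ ≡ 1 is dense in C[0,1] in the uniform norm. -/

import Mathlib

open MeasureTheory Set Filter Topology

/-- The Choquet integral of `f` over `A` with respect to the set function `μ`:
`∫_0^∞ μ({f ≥ β} ∩ A) dβ + ∫_{-∞}^0 (μ({f ≥ β} ∩ A) - μ A) dβ`. -/
noncomputable def choquet {α : Type*} (μ : Set α → ℝ) (A : Set α) (f : α → ℝ) : ℝ :=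
  (∫ β in Ioi (0:ℝ), μ ({ω | β ≤ f ω} ∩ A)) +
  ∫ β in Iio (0:ℝ), (μ ({ω | β ≤ f ω} ∩ A) - μ A)

/-- The Volterra–Choquet operator with respect to the distorted Lebesgue measure
`μ(A) = 1 − e^{−m(A)}`. -/
noncomputable def volterraChoquet (f : ℝ → ℝ) : ℝ → ℝ :=
  fun x => choquet (fun A => 1 - Real.exp (-(volume A).toReal)) (Icc 0 x) f
/-!
For `f` monotone and nonnegative on `[0, x]`, every upper level set `{f ≥ β} ∩ [0, x]` is a
terminal subinterval of `[0, x]`, of length `ℓ` say, and on such an interval the distorted measure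
`1 - e^{-ℓ}` coincides with the measure `e^{t-x} dt`. The layer-cake formula therefore turns
`V f x` into the ordinary integral `∫_0^x e^{t-x} f(t) dt`. Iterating from `1` produces the Erlang
distribution functions `F_n(x) = 1 - e^{-x} ∑_{k<n} x^k/k!`, which are monotone, so
`F_n - F_{n+1} = e^{-x} x^n/n!` lies in the span of the orbit, hence so does `e^{-x} p(x)` for
every polynomial `p`; Weierstrass approximation of `e^x g` by polynomials concludes.
-/

open Real Nat Polynomial

theorem setIntegral_exp_sub_eq_of_isGreatest {U : Set ℝ} {x : ℝ} (hU : U.OrdConnected)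
    (hbdd : BddBelow U) (hx : IsGreatest U x) :
    ∫ t in U, exp (t - x) = 1 - exp (-(volume U).toReal) := by
  set a := sInf U
  have hax : a ≤ x := csInf_le hbdd hx.1
  have hsub : U ⊆ Icc a x := fun t ht => ⟨csInf_le hbdd ht, hx.2 ht⟩
  have hsup : Ioc a x ⊆ U := fun t ht => by
    obtain ⟨s, hs, hst⟩ := (isGLB_lt_iff (isGLB_csInf ⟨x, hx.1⟩ hbdd)).1 ht.1
    exact hU.out hs hx.1 ⟨hst.le, ht.2⟩
  have hae : U =ᵐ[volume] Ioc a x :=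
    (hsub.eventuallyLE.trans Ioc_ae_eq_Icc.symm.le).antisymm hsup.eventuallyLE
  rw [setIntegral_congr_set hae, measure_congr hae, Real.volume_Ioc,
    ENNReal.toReal_ofReal (sub_nonneg.2 hax), ← intervalIntegral.integral_of_le hax,
    intervalIntegral.integral_comp_sub_right, integral_exp, sub_self, exp_zero]
  ring_nf

noncomputable def expWeightOn (x : ℝ) : Measure ℝ :=
  (volume.restrict (Icc 0 x)).withDensity fun t => ENNReal.ofReal (exp (t - x))

theorem expWeightOn_real_apply (x : ℝ) (S : Set ℝ) :
    (expWeightOn x).real S = ∫ t in S ∩ Icc 0 x, exp (t - x) := by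
  rw [expWeightOn, measureReal_def, withDensity_apply',
    Measure.restrict_restrict' measurableSet_Icc,
    integral_eq_lintegral_of_nonneg_ae (ae_of_all _ fun t => (exp_pos _).le) (by fun_prop)]

theorem integral_expWeightOn (x : ℝ) (f : ℝ → ℝ) :
    ∫ t, f t ∂expWeightOn x = ∫ t in Icc 0 x, exp (t - x) * f t := by
  rw [expWeightOn, integral_withDensity_eq_integral_toReal_smul (by fun_prop)
    (ae_of_all _ fun _ => ENNReal.ofReal_lt_top)]
  simp_rw [ENNReal.toReal_ofReal (exp_pos _).le, smul_eq_mul]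

theorem integrable_expWeightOn {f : ℝ → ℝ} {x : ℝ} (hf : IntegrableOn f (Icc 0 x)) :
    Integrable f (expWeightOn x) := by
  rw [expWeightOn, integrable_withDensity_iff_integrable_smul' (by fun_prop)
    (ae_of_all _ fun _ => ENNReal.ofReal_lt_top)]
  simp_rw [ENNReal.toReal_ofReal (exp_pos _).le, smul_eq_mul]
  exact hf.continuousOn_mul (by fun_prop) isCompact_Icc

theorem expWeightOn_real_setOf_le {f : ℝ → ℝ} {x : ℝ} (hf : MonotoneOn f (Icc 0 x)) (β : ℝ) :
    (expWeightOn x).real {ω | β ≤ f ω} = 1 - exp (-(volume ({ω | β ≤ f ω} ∩ Icc 0 x)).toReal) := by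
  rw [expWeightOn_real_apply]
  set U := {ω | β ≤ f ω} ∩ Icc 0 x
  rcases U.eq_empty_or_nonempty with hU | ⟨s, hsβ, hs⟩
  · simp [hU]
  have hxI : x ∈ Icc 0 x := ⟨hs.1.trans hs.2, le_rfl⟩
  have hUx : x ∈ U := ⟨hsβ.trans (hf hs hxI hs.2), hxI⟩
  have hU : U.OrdConnected := ⟨fun a ha b hb t ht => by
    have htI : t ∈ Icc 0 x := ⟨ha.2.1.trans ht.1, ht.2.trans hb.2.2⟩
    exact ⟨ha.1.trans (hf ha.2 htI ht.1), htI⟩⟩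
  exact setIntegral_exp_sub_eq_of_isGreatest hU ⟨0, fun t ht => ht.2.1⟩ ⟨hUx, fun t ht => ht.2.2⟩

theorem volterraChoquet_eq_integral_expWeightOn {f : ℝ → ℝ} {x : ℝ}
    (hf : MonotoneOn f (Icc 0 x)) (hf₀ : ∀ t ∈ Icc 0 x, 0 ≤ f t) :
    volterraChoquet f x = ∫ t, f t ∂expWeightOn x := by
  have hneg : ∀ β ∈ Iio (0 : ℝ), {ω | β ≤ f ω} ∩ Icc 0 x = Icc 0 x := fun β hβ =>
    inter_eq_self_of_subset_right fun t ht => (le_of_lt hβ).trans (hf₀ t ht)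
  have hnonneg : 0 ≤ᵐ[expWeightOn x] f :=
    withDensity_absolutelyContinuous _ _ ((ae_restrict_iff' measurableSet_Icc).2 (ae_of_all _ hf₀))
  have hint : Integrable f (expWeightOn x) :=
    integrable_expWeightOn (hf.integrableOn_isCompact isCompact_Icc)
  rw [hint.integral_eq_integral_meas_le hnonneg, volterraChoquet, choquet,
    setIntegral_congr_fun measurableSet_Iio (fun β hβ => by rw [hneg β hβ, sub_self]),
    integral_zero, add_zero]
  exact setIntegral_congr_fun measurableSet_Ioi fun β _ => (expWeightOn_real_setOf_le hf β).symm

theorem hasDerivAt_sum_range_succ_pow_div_factorial (n : ℕ) (t : ℝ) :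
    HasDerivAt (fun t : ℝ => ∑ k ∈ Finset.range (n + 1), t ^ k / k !)
      (∑ k ∈ Finset.range n, t ^ k / k !) t := by
  have hterm : ∀ k : ℕ, HasDerivAt (fun t : ℝ => t ^ (k + 1) / (k + 1)!) (t ^ k / k !) t := by
    intro k
    refine ((hasDerivAt_pow (k + 1) t).div_const ((k + 1)! : ℝ)).congr_deriv ?_
    push_cast [Nat.factorial_succ, Nat.add_sub_cancel]
    field_simp
  simp_rw [Finset.sum_range_succ' _ n, pow_zero, factorial_zero, cast_one, div_one]
  exact (HasDerivAt.fun_sum fun k _ => hterm k).add_const 1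

noncomputable def erlangCDF (n : ℕ) (t : ℝ) : ℝ :=
  1 - exp (-t) * ∑ k ∈ Finset.range n, t ^ k / k !

theorem erlangCDF_sub_erlangCDF_succ (n : ℕ) (t : ℝ) :
    erlangCDF n t - erlangCDF (n + 1) t = exp (-t) * (t ^ n / n !) := by
  rw [erlangCDF, erlangCDF, Finset.sum_range_succ]
  ring

theorem erlangCDF_nonneg (n : ℕ) {t : ℝ} (ht : 0 ≤ t) : 0 ≤ erlangCDF n t := by
  have h := mul_le_mul_of_nonneg_left (sum_le_exp_of_nonneg ht n) (exp_pos (-t)).le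
  rw [← exp_add, neg_add_cancel, exp_zero] at h
  exact sub_nonneg.2 h

theorem hasDerivAt_erlangCDF_succ (n : ℕ) (t : ℝ) :
    HasDerivAt (erlangCDF (n + 1)) (exp (-t) * (t ^ n / n !)) t := by
  have h := ((hasDerivAt_neg' t).exp.fun_mul
    (hasDerivAt_sum_range_succ_pow_div_factorial n t)).const_sub 1
  refine h.congr_deriv ?_
  rw [Finset.sum_range_succ]
  ring

theorem monotoneOn_erlangCDF (n : ℕ) : MonotoneOn (erlangCDF n) (Ici 0) := by
  cases n with
  | zero => exact fun _ _ _ _ _ => by simp [erlangCDF]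
  | succ n =>
    refine monotoneOn_of_hasDerivWithinAt_nonneg (convex_Ici 0)
      (fun t _ => (hasDerivAt_erlangCDF_succ n t).continuousAt.continuousWithinAt)
      (fun t _ => (hasDerivAt_erlangCDF_succ n t).hasDerivWithinAt) fun t ht => ?_
    rw [interior_Ici] at ht
    have : 0 ≤ t := le_of_lt ht
    positivity

theorem hasDerivAt_exp_mul_erlangCDF_succ (n : ℕ) (t : ℝ) :
    HasDerivAt (fun t => exp t * erlangCDF (n + 1) t) (exp t * erlangCDF n t) t := by
  have hexp : ∀ m s, exp s * erlangCDF m s = exp s - ∑ k ∈ Finset.range m, s ^ k / k ! := by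
    intro m s
    rw [erlangCDF, mul_sub, mul_one, ← mul_assoc, ← exp_add, add_neg_cancel, exp_zero, one_mul]
  simp_rw [hexp]
  exact (hasDerivAt_exp t).sub (hasDerivAt_sum_range_succ_pow_div_factorial n t)

theorem setIntegral_exp_sub_mul_erlangCDF (n : ℕ) {x : ℝ} (hx : 0 ≤ x) :
    ∫ t in Icc 0 x, exp (t - x) * erlangCDF n t = erlangCDF (n + 1) x := by
  have hcont : Continuous (erlangCDF n) := by unfold erlangCDF; fun_prop
  have hFTC : ∫ t in (0 : ℝ)..x, exp t * erlangCDF n t = exp x * erlangCDF (n + 1) x := by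
    rw [intervalIntegral.integral_eq_sub_of_hasDerivAt
      (fun t _ => hasDerivAt_exp_mul_erlangCDF_succ n t)
      ((continuous_exp.mul hcont).intervalIntegrable 0 x)]
    simp [erlangCDF, Finset.sum_range_succ']
  simp_rw [sub_eq_add_neg _ x, exp_add, mul_comm _ (exp (-x)), mul_assoc]
  rw [integral_Icc_eq_integral_Ioc, ← intervalIntegral.integral_of_le hx,
    intervalIntegral.integral_const_mul, hFTC, ← mul_assoc, ← exp_add, neg_add_cancel, exp_zero,
    one_mul]

theorem volterraChoquet_iterate_one_eq_erlangCDF {x : ℝ} (hx : 0 ≤ x) (n : ℕ) :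
    volterraChoquet^[n] (fun _ => 1) x = erlangCDF n x := by
  induction n generalizing x with
  | zero => simp [erlangCDF]
  | succ n ih =>
    have hmono : MonotoneOn (volterraChoquet^[n] (fun _ => 1)) (Icc 0 x) := fun a ha b hb hab => by
      rw [ih ha.1, ih hb.1]
      exact monotoneOn_erlangCDF n ha.1 hb.1 hab
    have hnonneg : ∀ t ∈ Icc 0 x, 0 ≤ volterraChoquet^[n] (fun _ => 1) t := fun t ht => by
      rw [ih ht.1]
      exact erlangCDF_nonneg n ht.1
    rw [Function.iterate_succ_apply', volterraChoquet_eq_integral_expWeightOn hmono hnonneg,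
      integral_expWeightOn, setIntegral_congr_fun measurableSet_Icc fun t ht => by rw [ih ht.1]]
    exact setIntegral_exp_sub_mul_erlangCDF n hx

theorem exists_mem_span_orbit_eq_exp_neg_mul_eval (p : ℝ[X]) :
    ∃ h ∈ Submodule.span ℝ (range fun n : ℕ => volterraChoquet^[n] (fun _ => 1)),
      ∀ x, 0 ≤ x → h x = exp (-x) * p.eval x := by
  induction p using Polynomial.induction_on' with
  | add p q hp hq =>
    obtain ⟨h₁, hh₁, hp⟩ := hp
    obtain ⟨h₂, hh₂, hq⟩ := hq
    exact ⟨h₁ + h₂, add_mem hh₁ hh₂, fun x hx => by simp [hp x hx, hq x hx, mul_add]⟩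
  | monomial n a =>
    refine ⟨(a * n !) • (volterraChoquet^[n] (fun _ => 1) - volterraChoquet^[n + 1] (fun _ => 1)),
      Submodule.smul_mem _ _ (sub_mem (Submodule.subset_span ⟨n, rfl⟩)
        (Submodule.subset_span ⟨n + 1, rfl⟩)), fun x hx => ?_⟩
    simp only [Pi.smul_apply, Pi.sub_apply, smul_eq_mul, eval_monomial,
      volterraChoquet_iterate_one_eq_erlangCDF hx, erlangCDF_sub_erlangCDF_succ]
    field_simp

/-- Cyclicity of the Volterra–Choquet operator with `μ(A) = 1 − e^{−m(A)}`: the linear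
span of the orbit `{f₀, V(f₀), V²(f₀), …}` of `f₀ ≡ 1` is dense in `C[0,1]` for the
uniform norm, i.e. every continuous function on `[0,1]` can be uniformly approximated
by elements of the span of the orbit. -/
theorem volterraChoquet_cyclic :
    ∀ g : ℝ → ℝ, ContinuousOn g (Icc 0 1) → ∀ ε > (0:ℝ),
      ∃ h ∈ Submodule.span ℝ
          (Set.range fun n : ℕ => volterraChoquet^[n] (fun _ => 1)),
        ∀ x ∈ Icc (0:ℝ) 1, |g x - h x| < ε := by
  intro g hg ε hε
  obtain ⟨p, hp⟩ := exists_polynomial_near_of_continuousOn 0 1 (fun t => exp t * g t)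
    (continuous_exp.continuousOn.mul hg) ε hε
  obtain ⟨h, hh, hhp⟩ := exists_mem_span_orbit_eq_exp_neg_mul_eval p
  refine ⟨h, hh, fun x hx => ?_⟩
  have hgx : g x - h x = exp (-x) * (exp x * g x - p.eval x) := by
    rw [hhp x hx.1, mul_sub, ← mul_assoc, ← exp_add, neg_add_cancel, exp_zero, one_mul]
  calc |g x - h x| = exp (-x) * |p.eval x - exp x * g x| := by
        rw [hgx, abs_mul, abs_of_pos (exp_pos _), abs_sub_comm]
    _ ≤ |p.eval x - exp x * g x| :=
        mul_le_of_le_one_left (abs_nonneg _) (exp_le_one_iff.2 (neg_nonpos.2 hx.1))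
    _ < ε := hp x hx
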